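/- Fix τ > 0 and constant step size δ > 0, and run the SVT iteration starting from Y⁰ = 0: X^k = D_τ(Y^{k−1}), Y^k = Y^{k−1} + δ P_Ω(M − X^k). Let k₀ be the integer with τ/(δ‖P_Ω(M)‖₂) ∈ (k₀−1, k₀], where ‖·‖₂ is the spectral norm. Then for all k = 1, …, k₀ one has X^k = 0 and Y^k = kδ · P_Ω(M). -/

import Mathlib

/-!
Duality `⟨Y, Z⟩ ≤ ‖Y‖₂ ‖Z‖_*` (expand `⟨Y, Z⟩` in an eigenbasis of `ZᵀZ` and apply
Cauchy–Schwarz) makes every `Y` with `‖Y‖₂ ≤ τ` a subgradient of `τ‖·‖_*` at `0`, and then `0`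
is the proximal point of `Y`: comparing the prox objective at `Z` with its value at `0` leaves
`½‖Z‖_F² ≤ 0`. For `k < k₀` the iterate `Y^k = kδ P_Ω(M)` has `‖Y^k‖₂ = kδ ‖P_Ω(M)‖₂ ≤ τ`,
so `X^{k+1} = 0` and `Y^{k+1} = Y^k + δ P_Ω(M)`.
-/

open Matrix Filter Topology

noncomputable def frob {n₁ n₂ : ℕ} (X : Matrix (Fin n₁) (Fin n₂) ℝ) : ℝ :=
  Real.sqrt (∑ i, ∑ j, (X i j) ^ 2)

noncomputable def mInner {n₁ n₂ : ℕ} (X Y : Matrix (Fin n₁) (Fin n₂) ℝ) : ℝ :=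
  ∑ i, ∑ j, X i j * Y i j

noncomputable def singVal {n₁ n₂ : ℕ} (X : Matrix (Fin n₁) (Fin n₂) ℝ) (j : Fin n₂) : ℝ :=
  Real.sqrt ((show (Xᵀ * X).IsHermitian by
    rw [← Matrix.conjTranspose_eq_transpose_of_trivial]
    exact Matrix.isHermitian_conjTranspose_mul_self X).eigenvalues j)

noncomputable def nuclearNorm {n₁ n₂ : ℕ} (X : Matrix (Fin n₁) (Fin n₂) ℝ) : ℝ :=
  ∑ j, singVal X j

noncomputable def specNorm {n₁ n₂ : ℕ} (X : Matrix (Fin n₁) (Fin n₂) ℝ) : ℝ :=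
  ⨆ j, singVal X j

noncomputable def ftau {n₁ n₂ : ℕ} (τ : ℝ) (X : Matrix (Fin n₁) (Fin n₂) ℝ) : ℝ :=
  τ * nuclearNorm X + (1 / 2) * frob X ^ 2

def projSet {n₁ n₂ : ℕ} (Ω : Finset (Fin n₁ × Fin n₂)) (X : Matrix (Fin n₁) (Fin n₂) ℝ) :
    Matrix (Fin n₁) (Fin n₂) ℝ :=
  Matrix.of fun i j => if (i, j) ∈ Ω then X i j else 0

def IsSubgradAt {n₁ n₂ : ℕ} (f : Matrix (Fin n₁) (Fin n₂) ℝ → ℝ)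
    (Z X₀ : Matrix (Fin n₁) (Fin n₂) ℝ) : Prop :=
  ∀ X, f X₀ + mInner Z (X - X₀) ≤ f X

noncomputable def eNorm {m : ℕ} (v : Fin m → ℝ) : ℝ := Real.sqrt (∑ i, v i ^ 2)

noncomputable def eInner {m : ℕ} (v w : Fin m → ℝ) : ℝ := ∑ i, v i * w i

section DotProduct

variable {ι : Type*} [Fintype ι]

lemma dotProduct_eq_sum_orthonormalBasis (b : OrthonormalBasis ι ℝ (EuclideanSpace ℝ ι))
    (u v : ι → ℝ) : u ⬝ᵥ v = ∑ j, (u ⬝ᵥ ⇑(b j)) * (v ⬝ᵥ ⇑(b j)) := by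
  have h := b.sum_inner_mul_inner (WithLp.toLp 2 v) (WithLp.toLp 2 u)
  simp only [EuclideanSpace.inner_eq_star_dotProduct, star_trivial] at h
  simpa [dotProduct_comm, mul_comm] using h.symm

lemma orthonormalBasis_dotProduct_self (b : OrthonormalBasis ι ℝ (EuclideanSpace ℝ ι))
    (j : ι) : ⇑(b j) ⬝ᵥ ⇑(b j) = 1 := by
  have h := b.inner_eq_one j
  rwa [EuclideanSpace.inner_eq_star_dotProduct, star_trivial] at h

lemma dotProduct_le_sqrt_mul_sqrt (u v : ι → ℝ) :
    u ⬝ᵥ v ≤ √(u ⬝ᵥ u) * √(v ⬝ᵥ v) := by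
  simpa only [dotProduct, sq] using Real.sum_mul_le_sqrt_mul_sqrt Finset.univ u v

end DotProduct

section SingularValues

variable {n₁ n₂ : ℕ}

lemma mInner_eq_sum_orthonormalBasis (b : OrthonormalBasis (Fin n₂) ℝ (EuclideanSpace ℝ (Fin n₂)))
    (X Y : Matrix (Fin n₁) (Fin n₂) ℝ) :
    mInner X Y = ∑ j, (X *ᵥ ⇑(b j)) ⬝ᵥ (Y *ᵥ ⇑(b j)) := by
  have hrow (i : Fin n₁) : ∑ j, X i j * Y i j = ∑ j, (X *ᵥ ⇑(b j)) i * (Y *ᵥ ⇑(b j)) i :=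
    dotProduct_eq_sum_orthonormalBasis b (X i) (Y i)
  simp only [mInner, hrow, dotProduct]
  exact Finset.sum_comm

lemma mulVec_dotProduct_mulVec_eq (X : Matrix (Fin n₁) (Fin n₂) ℝ) (v : Fin n₂ → ℝ) :
    (X *ᵥ v) ⬝ᵥ (X *ᵥ v) = v ⬝ᵥ ((Xᴴ * X) *ᵥ v) := by
  rw [conjTranspose_eq_transpose_of_trivial, ← mulVec_mulVec, mulVec_transpose, dotProduct_mulVec,
    dotProduct_comm]

lemma mulVec_eigenvectorBasis_dotProduct_mulVec (X : Matrix (Fin n₁) (Fin n₂) ℝ) (j : Fin n₂) :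
    (X *ᵥ ⇑((isHermitian_conjTranspose_mul_self X).eigenvectorBasis j)) ⬝ᵥ
      (X *ᵥ ⇑((isHermitian_conjTranspose_mul_self X).eigenvectorBasis j)) =
      (isHermitian_conjTranspose_mul_self X).eigenvalues j := by
  rw [mulVec_dotProduct_mulVec_eq, IsHermitian.mulVec_eigenvectorBasis, dotProduct_smul,
    orthonormalBasis_dotProduct_self, smul_eq_mul, mul_one]

lemma singVal_eq_sqrt_dotProduct (X : Matrix (Fin n₁) (Fin n₂) ℝ) (j : Fin n₂) :
    singVal X j = √((X *ᵥ ⇑((isHermitian_conjTranspose_mul_self X).eigenvectorBasis j)) ⬝ᵥ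
      (X *ᵥ ⇑((isHermitian_conjTranspose_mul_self X).eigenvectorBasis j))) := by
  rw [mulVec_eigenvectorBasis_dotProduct_mulVec]
  rfl

lemma singVal_nonneg (X : Matrix (Fin n₁) (Fin n₂) ℝ) (j : Fin n₂) : 0 ≤ singVal X j :=
  Real.sqrt_nonneg _

lemma singVal_le_specNorm (X : Matrix (Fin n₁) (Fin n₂) ℝ) (j : Fin n₂) :
    singVal X j ≤ specNorm X :=
  le_ciSup (Set.finite_range _).bddAbove j

lemma specNorm_nonneg (X : Matrix (Fin n₁) (Fin n₂) ℝ) : 0 ≤ specNorm X :=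
  Real.iSup_nonneg (singVal_nonneg X)

lemma nuclearNorm_nonneg (X : Matrix (Fin n₁) (Fin n₂) ℝ) : 0 ≤ nuclearNorm X :=
  Finset.sum_nonneg fun j _ => singVal_nonneg X j

@[simp]
lemma nuclearNorm_zero : nuclearNorm (0 : Matrix (Fin n₁) (Fin n₂) ℝ) = 0 := by
  simp [nuclearNorm, singVal_eq_sqrt_dotProduct]

lemma eigenvalues_conjTranspose_mul_self_le_specNorm_sq (X : Matrix (Fin n₁) (Fin n₂) ℝ)
    (j : Fin n₂) : (isHermitian_conjTranspose_mul_self X).eigenvalues j ≤ specNorm X ^ 2 := by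
  calc _ = singVal X j ^ 2 := (Real.sq_sqrt (eigenvalues_conjTranspose_mul_self_nonneg X j)).symm
    _ ≤ specNorm X ^ 2 := pow_le_pow_left₀ (singVal_nonneg X j) (singVal_le_specNorm X j) 2

lemma mulVec_dotProduct_mulVec_le (X : Matrix (Fin n₁) (Fin n₂) ℝ) (v : Fin n₂ → ℝ) :
    (X *ᵥ v) ⬝ᵥ (X *ᵥ v) ≤ specNorm X ^ 2 * (v ⬝ᵥ v) := by
  set hH := isHermitian_conjTranspose_mul_self X
  set b := hH.eigenvectorBasis
  have hcoord (j : Fin n₂) : ((Xᴴ * X) *ᵥ v) ⬝ᵥ ⇑(b j) = hH.eigenvalues j * (v ⬝ᵥ ⇑(b j)) := by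
    rw [dotProduct_comm, dotProduct_mulVec, ← mulVec_transpose,
      ← conjTranspose_eq_transpose_of_trivial, hH.eq, hH.mulVec_eigenvectorBasis, smul_dotProduct,
      smul_eq_mul, dotProduct_comm]
  calc (X *ᵥ v) ⬝ᵥ (X *ᵥ v) = ∑ j, hH.eigenvalues j * (v ⬝ᵥ ⇑(b j)) ^ 2 := by
        rw [mulVec_dotProduct_mulVec_eq, dotProduct_eq_sum_orthonormalBasis b v]
        refine Finset.sum_congr rfl fun j _ => ?_
        rw [hcoord]
        ring
    _ ≤ ∑ j, specNorm X ^ 2 * (v ⬝ᵥ ⇑(b j)) ^ 2 := by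
        gcongr with j
        exact eigenvalues_conjTranspose_mul_self_le_specNorm_sq X j
    _ = specNorm X ^ 2 * (v ⬝ᵥ v) := by
        rw [← Finset.mul_sum, dotProduct_eq_sum_orthonormalBasis b v v]
        simp only [sq]

lemma mInner_le_specNorm_mul_nuclearNorm (Y X : Matrix (Fin n₁) (Fin n₂) ℝ) :
    mInner Y X ≤ specNorm Y * nuclearNorm X := by
  set b := (isHermitian_conjTranspose_mul_self X).eigenvectorBasis
  have hY (j : Fin n₂) : √((Y *ᵥ ⇑(b j)) ⬝ᵥ (Y *ᵥ ⇑(b j))) ≤ specNorm Y := by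
    refine Real.sqrt_le_iff.mpr ⟨specNorm_nonneg Y, ?_⟩
    simpa [orthonormalBasis_dotProduct_self] using mulVec_dotProduct_mulVec_le Y ⇑(b j)
  rw [mInner_eq_sum_orthonormalBasis b, nuclearNorm, Finset.mul_sum]
  refine Finset.sum_le_sum fun j _ => ?_
  calc (Y *ᵥ ⇑(b j)) ⬝ᵥ (X *ᵥ ⇑(b j))
      ≤ √((Y *ᵥ ⇑(b j)) ⬝ᵥ (Y *ᵥ ⇑(b j))) * singVal X j := by
        rw [singVal_eq_sqrt_dotProduct]
        exact dotProduct_le_sqrt_mul_sqrt _ _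
    _ ≤ specNorm Y * singVal X j := mul_le_mul_of_nonneg_right (hY j) (singVal_nonneg X j)

lemma isSubgradAt_nuclearNorm_zero_smul {τ c : ℝ} {Y : Matrix (Fin n₁) (Fin n₂) ℝ} (hc : 0 ≤ c)
    (hcY : c * specNorm Y ≤ τ) : IsSubgradAt (fun Z => τ * nuclearNorm Z) (c • Y) 0 := by
  intro Z
  have hZ := mInner_le_specNorm_mul_nuclearNorm Y Z
  have hsmul : mInner (c • Y) Z = c * mInner Y Z := by
    simp only [mInner, Matrix.smul_apply, smul_eq_mul, Finset.mul_sum, mul_assoc]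
  show τ * nuclearNorm 0 + mInner (c • Y) (Z - 0) ≤ τ * nuclearNorm Z
  rw [nuclearNorm_zero, sub_zero, hsmul]
  nlinarith [nuclearNorm_nonneg Z]

end SingularValues

section Prox

variable {n₁ n₂ : ℕ}

lemma frob_sq (A : Matrix (Fin n₁) (Fin n₂) ℝ) : frob A ^ 2 = ∑ i, ∑ j, A i j ^ 2 :=
  Real.sq_sqrt (by positivity)

lemma frob_sub_sq (A B : Matrix (Fin n₁) (Fin n₂) ℝ) :
    frob (A - B) ^ 2 = frob A ^ 2 - 2 * mInner B A + frob B ^ 2 := by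
  simp only [frob_sq, mInner, Matrix.sub_apply, Finset.mul_sum, ← Finset.sum_sub_distrib,
    ← Finset.sum_add_distrib]
  exact Finset.sum_congr rfl fun _ _ => Finset.sum_congr rfl fun _ _ => by ring

lemma frob_neg (A : Matrix (Fin n₁) (Fin n₂) ℝ) : frob (-A) = frob A := by
  simp [frob]

lemma eq_zero_of_frob_sq_nonpos {A : Matrix (Fin n₁) (Fin n₂) ℝ} (h : frob A ^ 2 ≤ 0) : A = 0 := by
  rw [frob_sq] at h
  have hsq := (Finset.sum_eq_zero_iff_of_nonneg fun i _ => Finset.sum_nonneg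
    fun j _ => sq_nonneg (A i j)).mp (h.antisymm (by positivity))
  ext i j
  simpa using (Finset.sum_eq_zero_iff_of_nonneg fun j _ => sq_nonneg (A i j)).mp
    (hsq i (Finset.mem_univ i)) j (Finset.mem_univ j)

lemma eq_zero_of_isMinOn_prox {f : Matrix (Fin n₁) (Fin n₂) ℝ → ℝ}
    {Y Z : Matrix (Fin n₁) (Fin n₂) ℝ}
    (hY : IsSubgradAt f Y 0) (hZ : IsMinOn (fun Z => f Z + 1 / 2 * frob (Z - Y) ^ 2) Set.univ Z) :
    Z = 0 := by
  have hmin := isMinOn_iff.mp hZ 0 (Set.mem_univ 0)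
  have hsub := hY Z
  simp only [frob_sub_sq, zero_sub, frob_neg, sub_zero] at hmin hsub
  apply eq_zero_of_frob_sq_nonpos
  linarith

end Prox

theorem initial_steps_general (n₁ n₂ : ℕ) (τ δ : ℝ) (hδ : 0 < δ)
    (Ω : Finset (Fin n₁ × Fin n₂)) (M : Matrix (Fin n₁) (Fin n₂) ℝ)
    (hM : 0 < specNorm (projSet Ω M))
    (X Y : ℕ → Matrix (Fin n₁) (Fin n₂) ℝ)
    (hY0 : Y 0 = 0)
    (hX : ∀ k, IsMinOn (fun Z => τ * nuclearNorm Z + (1 / 2) * frob (Z - Y k) ^ 2)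
        Set.univ (X (k + 1)))
    (hY : ∀ k, Y (k + 1) = Y k + δ • projSet Ω (M - X (k + 1)))
    (k₀ : ℕ)
    (hk₀ : (k₀ : ℝ) - 1 < τ / (δ * specNorm (projSet Ω M)) ∧
      τ / (δ * specNorm (projSet Ω M)) ≤ (k₀ : ℝ)) :
    ∀ k : ℕ, 1 ≤ k → k ≤ k₀ →
      X k = 0 ∧ Y k = ((k : ℝ) * δ) • projSet Ω M := by
  set P := projSet Ω M
  have hsmall : ∀ k < k₀, (k : ℝ) * δ * specNorm P ≤ τ := by
    intro k hk
    have hk' : (k : ℝ) < τ / (δ * specNorm P) := by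
      have : (k : ℝ) + 1 ≤ k₀ := by exact_mod_cast hk
      linarith [hk₀.1]
    rw [lt_div_iff₀ (by positivity)] at hk'
    linarith
  have hX0 : ∀ k < k₀, Y k = ((k : ℝ) * δ) • P → X (k + 1) = 0 := fun k hk hYk =>
    eq_zero_of_isMinOn_prox (hYk ▸ isSubgradAt_nuclearNorm_zero_smul (by positivity) (hsmall k hk))
      (hX k)
  have hYk : ∀ k ≤ k₀, Y k = ((k : ℝ) * δ) • P := by
    intro k hk
    induction k with
    | zero => simp [hY0]
    | succ k ih =>
      have hYk := ih (by omega)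
      rw [hY k, hX0 k (by omega) hYk, sub_zero, hYk, Nat.cast_succ, add_mul, one_mul, add_smul]
  intro k hk1 hk
  obtain ⟨k, rfl⟩ := Nat.exists_eq_add_of_le' hk1
  exact ⟨hX0 k (by omega) (hYk k (by omega)), hYk (k + 1) hk⟩

/-- With constant step size `δ > 0` and `Y⁰ = 0`, if `k₀` is the integer with
`τ/(δ‖P_Ω(M)‖₂) ∈ (k₀ - 1, k₀]`, then for all `1 ≤ k ≤ k₀` one has `X^k = 0` and
`Y^k = kδ·P_Ω(M)`. Here `X^{k}` is characterized as the prox minimizer, i.e.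
`X^k = D_τ(Y^{k-1})`. -/
theorem initial_steps (n₁ n₂ : ℕ) (τ δ : ℝ) (hτ : 0 < τ) (hδ : 0 < δ)
    (Ω : Finset (Fin n₁ × Fin n₂)) (M : Matrix (Fin n₁) (Fin n₂) ℝ)
    (hM : 0 < specNorm (projSet Ω M))
    (X Y : ℕ → Matrix (Fin n₁) (Fin n₂) ℝ)
    (hY0 : Y 0 = 0)
    (hX : ∀ k, IsMinOn (fun Z => τ * nuclearNorm Z + (1 / 2) * frob (Z - Y k) ^ 2)
        Set.univ (X (k + 1)))
    (hY : ∀ k, Y (k + 1) = Y k + δ • projSet Ω (M - X (k + 1)))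
    (k₀ : ℕ)
    (hk₀ : (k₀ : ℝ) - 1 < τ / (δ * specNorm (projSet Ω M)) ∧
      τ / (δ * specNorm (projSet Ω M)) ≤ (k₀ : ℝ)) :
    ∀ k : ℕ, 1 ≤ k → k ≤ k₀ →
      X k = 0 ∧ Y k = ((k : ℝ) * δ) • projSet Ω M :=
  initial_steps_general n₁ n₂ τ δ hδ Ω M hM X Y hY0 hX hY k₀ hk₀
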